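/- arXiv:2305.12413 — 7 statements merged into one kernel-verified Lean document; each statement's English description precedes it below -/
import Mathlib

section
/- Pathwise comparison lemma: let f* : ℝ → ℝ be locally Lipschitz, and let ω, a, f, x, x* : [0, ∞) → ℝ be continuous functions such that for every t ≥ 0 one has x_t = x_0 + 2ω_t + ∫₀^t f_s ds and x*_t = x*_0 + 2ω_t + ∫₀^t (a_s + f*(x*_s)) ds. If x_0 ≤ x*_0 and f_t ≤ a_t + f*(x_t) for every t ≥ 0, then x_t ≤ x*_t for every t ≥ 0. Symmetrically, if x_0 ≥ x*_0 and f_t ≥ a_t + f*(x_t) for every t ≥ 0, then x_t ≥ x*_t for every t ≥ 0. -/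
/-!
The common noise `2 ω` cancels in `d = x - xstar`, which therefore has right derivative
`f - a - fstar ∘ xstar ≤ fstar ∘ x - fstar ∘ xstar`. On a compact time interval `fstar` is
`K`-Lipschitz on the range of both paths, so `d' ≤ K d` wherever `d > 0`; fencing `d` by
`ε e^{(|K|+1)(t-T)}` and letting `ε → 0` keeps `d ≤ 0`.
-/

open MeasureTheory intervalIntegral Set

theorem image_nonpos_of_deriv_right_le_mul {f f' : ℝ → ℝ} {a b : ℝ} (K : ℝ)
    (hf : ContinuousOn f (Icc a b)) (hf' : ∀ x ∈ Ico a b, HasDerivWithinAt f (f' x) (Ici x) x)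
    (ha : f a ≤ 0) (bound : ∀ x ∈ Ico a b, 0 < f x → f' x ≤ K * f x) :
    ∀ ⦃x⦄, x ∈ Icc a b → f x ≤ 0 := by
  intro x hx
  refine le_of_forall_pos_le_add fun ε hε => ?_
  set L := |K| + 1
  set B : ℝ → ℝ := fun t => ε * Real.exp (L * (t - b))
  have hB : ∀ t, HasDerivAt B (L * B t) t := fun t => by
    have h := (((hasDerivAt_id t).sub_const b).const_mul L).exp.const_mul ε
    simp only [id] at h
    exact h.congr_deriv (by ring)
  have hBpos : ∀ t, 0 < B t := fun t => by positivity
  have hfB := image_le_of_deriv_right_lt_deriv_boundary hf hf' (ha.trans (hBpos a).le) hB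
    fun t ht hft => by
      have := bound t ht (hft ▸ hBpos t)
      rw [hft] at this
      nlinarith [hBpos t, le_abs_self K]
  calc f x ≤ B x := hfB hx
    _ ≤ ε := mul_le_of_le_one_right hε.le <| Real.exp_le_one_iff.mpr <|
          mul_nonpos_of_nonneg_of_nonpos (by positivity) (sub_nonpos.mpr hx.2)
    _ = 0 + ε := (zero_add ε).symm

theorem ContinuousOn.hasDerivWithinAt_integral_Ici {φ : ℝ → ℝ} {a t : ℝ}
    (hφ : ContinuousOn φ (Ici a)) (ht : a ≤ t) :
    HasDerivWithinAt (fun u => ∫ s in a..u, φ s) (φ t) (Ici t) t := by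
  have hIoi : Ioi t ⊆ Ici a := fun s hs => ht.trans (le_of_lt hs)
  refine integral_hasDerivWithinAt_right
    ((hφ.mono (uIcc_of_le ht ▸ Icc_subset_Ici_self)).intervalIntegrable) ?_
    ((hφ t ht).mono hIoi)
  exact ⟨Ici a, nhdsWithin_mono t hIoi self_mem_nhdsWithin,
    hφ.aestronglyMeasurable measurableSet_Ici⟩

theorem le_of_eq_add_integral {F : ℝ → ℝ} (hF : LocallyLipschitz F) {x y c g h : ℝ → ℝ}
    (hx : ContinuousOn x (Ici 0)) (hy : ContinuousOn y (Ici 0))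
    (hg : ContinuousOn g (Ici 0)) (hh : ContinuousOn h (Ici 0))
    (hxeq : ∀ t, 0 ≤ t → x t = x 0 + c t + ∫ s in (0 : ℝ)..t, g s)
    (hyeq : ∀ t, 0 ≤ t → y t = y 0 + c t + ∫ s in (0 : ℝ)..t, h s)
    (hgh : ∀ t, 0 ≤ t → g t - h t ≤ F (x t) - F (y t)) (h0 : x 0 ≤ y 0) :
    ∀ t, 0 ≤ t → x t ≤ y t := by
  intro T hT
  have hxy : ∀ t, 0 ≤ t → x t - y t = x 0 - y 0 + ∫ s in (0 : ℝ)..t, (g s - h s) := by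
    intro t ht
    have hint : ∀ {φ : ℝ → ℝ}, ContinuousOn φ (Ici 0) → IntervalIntegrable φ volume 0 t :=
      fun hφ => (hφ.mono Icc_subset_Ici_self).intervalIntegrable_of_Icc ht
    rw [hxeq t ht, hyeq t ht, integral_sub (hint hg) (hint hh)]
    ring
  have hderiv : ∀ t ∈ Ico 0 T, HasDerivWithinAt (fun t => x t - y t) (g t - h t) (Ici t) t :=
    fun t ht => ((hg.sub hh).hasDerivWithinAt_integral_Ici ht.1).const_add (x 0 - y 0)
      |>.congr (fun s hs => hxy s (ht.1.trans hs)) (hxy t ht.1)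
  obtain ⟨K, hK⟩ : ∃ K, LipschitzOnWith K F (x '' Icc 0 T ∪ y '' Icc 0 T) :=
    hF.locallyLipschitzOn.exists_lipschitzOnWith_of_compact
      ((isCompact_Icc.image_of_continuousOn (hx.mono Icc_subset_Ici_self)).union
        (isCompact_Icc.image_of_continuousOn (hy.mono Icc_subset_Ici_self)))
  have hbound : ∀ t ∈ Ico 0 T, 0 < x t - y t → g t - h t ≤ K * (x t - y t) := by
    intro t ht hpos
    have hLip := hK.dist_le_mul (x t) (.inl ⟨t, Ico_subset_Icc_self ht, rfl⟩)
      (y t) (.inr ⟨t, Ico_subset_Icc_self ht, rfl⟩)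
    rw [Real.dist_eq, Real.dist_eq, abs_of_pos hpos] at hLip
    linarith [hgh t ht.1, le_abs_self (F (x t) - F (y t))]
  exact sub_nonpos.mp <| image_nonpos_of_deriv_right_le_mul K
    ((hx.sub hy).mono Icc_subset_Ici_self) hderiv (sub_nonpos.mpr h0) hbound ⟨hT, le_rfl⟩

theorem comparison_lemma_general
    (fstar : ℝ → ℝ) (hfstar : LocallyLipschitz fstar)
    (ω a f x xstar : ℝ → ℝ)
    (ha : ContinuousOn a (Set.Ici 0))
    (hf : ContinuousOn f (Set.Ici 0)) (hx : ContinuousOn x (Set.Ici 0))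
    (hxstar : ContinuousOn xstar (Set.Ici 0))
    (hxeq : ∀ t : ℝ, 0 ≤ t → x t = x 0 + 2 * ω t + ∫ s in (0:ℝ)..t, f s)
    (hxstareq : ∀ t : ℝ, 0 ≤ t →
      xstar t = xstar 0 + 2 * ω t + ∫ s in (0:ℝ)..t, (a s + fstar (xstar s))) :
    ((x 0 ≤ xstar 0 ∧ ∀ t : ℝ, 0 ≤ t → f t ≤ a t + fstar (x t)) →
       ∀ t : ℝ, 0 ≤ t → x t ≤ xstar t)
    ∧ ((xstar 0 ≤ x 0 ∧ ∀ t : ℝ, 0 ≤ t → a t + fstar (x t) ≤ f t) →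
       ∀ t : ℝ, 0 ≤ t → xstar t ≤ x t) := by
  have hdrift : ContinuousOn (fun s => a s + fstar (xstar s)) (Ici 0) :=
    ha.add (hfstar.continuous.comp_continuousOn hxstar)
  constructor
  · rintro ⟨h0, hle⟩
    exact le_of_eq_add_integral hfstar hx hxstar hf hdrift hxeq hxstareq
      (fun t ht => by linarith [hle t ht]) h0
  · rintro ⟨h0, hle⟩
    exact le_of_eq_add_integral hfstar hxstar hx hdrift hf hxstareq hxeq
      (fun t ht => by linarith [hle t ht]) h0

/-- Pathwise comparison lemma: let `fstar : ℝ → ℝ` be locally Lipschitz and let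
`ω, a, f, x, xstar` be continuous on `[0, ∞)` with
`x t = x 0 + 2 ω t + ∫₀^t f` and `xstar t = xstar 0 + 2 ω t + ∫₀^t (a + fstar ∘ xstar)`
for every `t ≥ 0`. If `x 0 ≤ xstar 0` and `f t ≤ a t + fstar (x t)` for all `t ≥ 0`,
then `x ≤ xstar` on `[0, ∞)`; symmetrically, if `x 0 ≥ xstar 0` and
`f t ≥ a t + fstar (x t)` for all `t ≥ 0`, then `x ≥ xstar` on `[0, ∞)`. -/
theorem comparison_lemma
    (fstar : ℝ → ℝ) (hfstar : LocallyLipschitz fstar)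
    (ω a f x xstar : ℝ → ℝ)
    (hω : ContinuousOn ω (Set.Ici 0)) (ha : ContinuousOn a (Set.Ici 0))
    (hf : ContinuousOn f (Set.Ici 0)) (hx : ContinuousOn x (Set.Ici 0))
    (hxstar : ContinuousOn xstar (Set.Ici 0))
    (hxeq : ∀ t : ℝ, 0 ≤ t → x t = x 0 + 2 * ω t + ∫ s in (0:ℝ)..t, f s)
    (hxstareq : ∀ t : ℝ, 0 ≤ t →
      xstar t = xstar 0 + 2 * ω t + ∫ s in (0:ℝ)..t, (a s + fstar (xstar s))) :
    ((x 0 ≤ xstar 0 ∧ ∀ t : ℝ, 0 ≤ t → f t ≤ a t + fstar (x t)) →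
       ∀ t : ℝ, 0 ≤ t → x t ≤ xstar t)
    ∧ ((xstar 0 ≤ x 0 ∧ ∀ t : ℝ, 0 ≤ t → a t + fstar (x t) ≤ f t) →
       ∀ t : ℝ, 0 ≤ t → xstar t ≤ x t) :=
  comparison_lemma_general fstar hfstar ω a f x xstar ha hf hx hxstar hxeq hxstareq
end

section
/- Deterministic bounds from an arbitrary time: let ε > 0, T ∈ ℝ, let b : [T, ∞) → ℝ be continuous, and let ℓ : [T, ∞) → ℝ be a continuous function satisfying ℓ_t = ℓ_T + 2(b_t − b_T) − ε ∫_T^t (e^{ℓ_s} − e^{−ℓ_s}) ds for every t ≥ T. Then for every t ≥ T one has ℓ_t ≥ ℓ_T + 2(b_t − b_T) − log(1 + ε e^{ℓ_T} ∫_T^t e^{2(b_s − b_T)} ds) and ℓ_t ≤ ℓ_T + 2(b_t − b_T) + log(1 + ε e^{−ℓ_T} ∫_T^t e^{−2(b_s − b_T)} ds). -/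
open MeasureTheory intervalIntegral Real

lemma lower_bound_aux
    (ε T : ℝ) (hε : 0 < ε)
    (b ℓ : ℝ → ℝ)
    (hb : ContinuousOn b (Set.Ici T)) (hℓ : ContinuousOn ℓ (Set.Ici T))
    (hℓeq : ∀ t : ℝ, T ≤ t →
      ℓ t = ℓ T + 2 * (b t - b T) - ε * ∫ s in T..t, (Real.exp (ℓ s) - Real.exp (-ℓ s)))
    (t : ℝ) (ht : T ≤ t) :
    ℓ T + 2 * (b t - b T)
        - Real.log (1 + ε * Real.exp (ℓ T) * ∫ s in T..t, Real.exp (2 * (b s - b T))) ≤ ℓ t := by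
  set g : ℝ → ℝ := fun s => Real.exp (ℓ s) - Real.exp (-ℓ s) with hg_def
  have hgcont : ContinuousOn g (Set.Ici T) :=
    (Real.continuous_exp.comp_continuousOn hℓ).sub
      (Real.continuous_exp.comp_continuousOn hℓ.neg)
  set A : ℝ → ℝ := fun s => ∫ u in T..s, g u with hA_def
  have hgint : ∀ s, T ≤ s → s ≤ t → IntervalIntegrable g volume T s := fun s hs _ =>
    (hgcont.mono (by rw [Set.uIcc_of_le hs]; exact Set.Icc_subset_Ici_self)).intervalIntegrable
  -- continuity of A on Icc T t
  have hAcont : ContinuousOn A (Set.Icc T t) := by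
    have := intervalIntegral.continuousOn_primitive_interval
      (f := g) (a := T) (b := t) (μ := volume)
      ((hgcont.mono (by rw [Set.uIcc_of_le ht]; exact Set.Icc_subset_Ici_self)).integrableOn_compact
        (by rw [Set.uIcc_of_le ht]; exact isCompact_Icc))
    rwa [Set.uIcc_of_le ht] at this
  set F : ℝ → ℝ := fun s => Real.exp (ε * A s) with hF_def
  have hFcont : ContinuousOn F (Set.Icc T t) :=
    Real.continuous_exp.comp_continuousOn (continuousOn_const.mul hAcont)
  have hAderiv : ∀ s ∈ Set.Ioo T t, HasDerivAt A (g s) s := by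
    intro s hs
    refine intervalIntegral.integral_hasDerivAt_right (hgint s hs.1.le hs.2.le) ?_ ?_
    · exact ContinuousOn.stronglyMeasurableAtFilter isOpen_Ioi
        (hgcont.mono Set.Ioi_subset_Ici_self) s hs.1
    · exact (hgcont s (le_of_lt hs.1)).continuousAt (Ici_mem_nhds hs.1)
  have hFderiv : ∀ s ∈ Set.Ioo T t, HasDerivAt F (Real.exp (ε * A s) * (ε * g s)) s := by
    intro s hs
    exact (((hAderiv s hs).const_mul ε).exp)
  -- F' is continuous on Icc, hence integrable
  have hF'cont : ContinuousOn (fun s => Real.exp (ε * A s) * (ε * g s)) (Set.Icc T t) :=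
    (Real.continuous_exp.comp_continuousOn (continuousOn_const.mul hAcont)).mul
      (continuousOn_const.mul (hgcont.mono Set.Icc_subset_Ici_self))
  have hF'int : IntervalIntegrable (fun s => Real.exp (ε * A s) * (ε * g s)) volume T t :=
    (hF'cont.mono (by rw [Set.uIcc_of_le ht])).intervalIntegrable
  have hFTC : ∫ s in T..t, Real.exp (ε * A s) * (ε * g s) = F t - F T := by
    refine intervalIntegral.integral_eq_sub_of_hasDeriv_right_of_le ht hFcont
      (fun s hs => (hFderiv s hs).hasDerivWithinAt) hF'int
  have hFT : F T = 1 := by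
    simp [hF_def, hA_def]
  -- pointwise bound
  have hpt : ∀ s ∈ Set.Icc T t,
      Real.exp (ε * A s) * (ε * g s) ≤ ε * (Real.exp (ℓ T) * Real.exp (2 * (b s - b T))) := by
    intro s hs
    have heq := hℓeq s hs.1
    have hkey : Real.exp (ℓ s) * Real.exp (ε * A s) = Real.exp (ℓ T) * Real.exp (2 * (b s - b T)) := by
      rw [← Real.exp_add, ← Real.exp_add]
      congr 1
      rw [hA_def]
      simp only
      rw [heq]; ring
    have h1 : Real.exp (ε * A s) * (ε * g s)
        ≤ Real.exp (ε * A s) * (ε * Real.exp (ℓ s)) := by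
      apply mul_le_mul_of_nonneg_left _ (Real.exp_nonneg _)
      have : g s ≤ Real.exp (ℓ s) := by
        simp only [hg_def]
        nlinarith [Real.exp_nonneg (-ℓ s)]
      nlinarith
    calc Real.exp (ε * A s) * (ε * g s) ≤ Real.exp (ε * A s) * (ε * Real.exp (ℓ s)) := h1
      _ = ε * (Real.exp (ℓ s) * Real.exp (ε * A s)) := by ring
      _ = ε * (Real.exp (ℓ T) * Real.exp (2 * (b s - b T))) := by rw [hkey]
  -- RHS integrable
  have hrhscont : ContinuousOn (fun s => ε * (Real.exp (ℓ T) * Real.exp (2 * (b s - b T))))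
      (Set.Icc T t) :=
    continuousOn_const.mul (continuousOn_const.mul
      (Real.continuous_exp.comp_continuousOn
        ((continuousOn_const.mul ((hb.mono Set.Icc_subset_Ici_self).sub continuousOn_const)))))
  have hrhsint : IntervalIntegrable (fun s => ε * (Real.exp (ℓ T) * Real.exp (2 * (b s - b T))))
      volume T t := (hrhscont.mono (by rw [Set.uIcc_of_le ht])).intervalIntegrable
  have hmono := intervalIntegral.integral_mono_on ht hF'int hrhsint hpt
  have hrhseval : ∫ s in T..t, ε * (Real.exp (ℓ T) * Real.exp (2 * (b s - b T)))
      = ε * Real.exp (ℓ T) * ∫ s in T..t, Real.exp (2 * (b s - b T)) := by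
    rw [intervalIntegral.integral_const_mul]
    rw [intervalIntegral.integral_const_mul]
    ring
  have hmain : Real.exp (ε * A t) ≤ 1 + ε * Real.exp (ℓ T) * ∫ s in T..t, Real.exp (2 * (b s - b T)) := by
    have := hmono
    rw [hFTC, hrhseval, hFT] at this
    simpa [hF_def] using by linarith
  have hIpos : 0 < 1 + ε * Real.exp (ℓ T) * ∫ s in T..t, Real.exp (2 * (b s - b T)) :=
    lt_of_lt_of_le (Real.exp_pos _) hmain
  have hlog : ε * A t ≤ Real.log (1 + ε * Real.exp (ℓ T) * ∫ s in T..t, Real.exp (2 * (b s - b T))) :=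
    (Real.le_log_iff_exp_le hIpos).mpr hmain
  have := hℓeq t ht
  rw [this]
  have : (∫ s in T..t, (Real.exp (ℓ s) - Real.exp (-ℓ s))) = A t := rfl
  rw [this]
  linarith

/-- Deterministic bounds from an arbitrary time: if `ℓ` solves
`ℓ t = ℓ T + 2 (b t − b T) − ε ∫_T^t (e^{ℓ s} − e^{−ℓ s}) ds` on `[T, ∞)` with `b`
continuous, then for every `t ≥ T`,
`ℓ t ≥ ℓ T + 2 (b t − b T) − log (1 + ε e^{ℓ T} ∫_T^t e^{2(b s − b T)} ds)` and
`ℓ t ≤ ℓ T + 2 (b t − b T) + log (1 + ε e^{−ℓ T} ∫_T^t e^{−2(b s − b T)} ds)`. -/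
theorem bounds_from_arbitrary_time
    (ε T : ℝ) (hε : 0 < ε)
    (b ℓ : ℝ → ℝ)
    (hb : ContinuousOn b (Set.Ici T)) (hℓ : ContinuousOn ℓ (Set.Ici T))
    (hℓeq : ∀ t : ℝ, T ≤ t →
      ℓ t = ℓ T + 2 * (b t - b T) - ε * ∫ s in T..t, (Real.exp (ℓ s) - Real.exp (-ℓ s))) :
    ∀ t : ℝ, T ≤ t →
      (ℓ T + 2 * (b t - b T)
          - Real.log (1 + ε * Real.exp (ℓ T) * ∫ s in T..t, Real.exp (2 * (b s - b T))) ≤ ℓ t)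
      ∧ (ℓ t ≤ ℓ T + 2 * (b t - b T)
          + Real.log (1 + ε * Real.exp (-ℓ T) * ∫ s in T..t, Real.exp (-2 * (b s - b T)))) := by
  intro t ht
  constructor
  · exact lower_bound_aux ε T hε b ℓ hb hℓ hℓeq t ht
  · have hℓeq' : ∀ u : ℝ, T ≤ u →
        (-ℓ ·) u = (-ℓ ·) T + 2 * ((-b ·) u - (-b ·) T)
          - ε * ∫ s in T..u, (Real.exp ((-ℓ ·) s) - Real.exp (-(-ℓ ·) s)) := by
      intro u hu
      have h := hℓeq u hu
      have : (∫ s in T..u, (Real.exp (-ℓ s) - Real.exp (ℓ s)))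
          = - ∫ s in T..u, (Real.exp (ℓ s) - Real.exp (-ℓ s)) := by
        rw [← intervalIntegral.integral_neg]
        congr 1; funext s; ring
      simp only [neg_neg]
      rw [this]
      linarith
    have h := lower_bound_aux ε T hε (-b ·) (-ℓ ·) hb.neg hℓ.neg hℓeq' t ht
    have hint : (∫ s in T..t, Real.exp (2 * (-b s - -b T)))
        = ∫ s in T..t, Real.exp (-2 * (b s - b T)) := by
      congr 1; funext s; congr 1; ring
    rw [hint] at h
    linarith
end

section
/- Exponential contraction of two solutions (pathwise form): let ε > 0, a ∈ ℝ, let b : [a, ∞) → ℝ be continuous, and let l¹, l² : [a, ∞) → ℝ be continuous functions such that for i = 1, 2 and all a ≤ s ≤ t one has l^i_t = l^i_s + 2(b_t − b_s) − 2ε ∫_s^t sinh(l^i_u) du. If l²_{s₀} ≥ l¹_{s₀} for some s₀ ≥ a, then for every t ≥ s₀ one has l²_t ≥ l¹_t and tanh((l²_t − l¹_t)/4) ≤ e^{−2ε(t − s₀)} · tanh((l²_{s₀} − l¹_{s₀})/4). -/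
open MeasureTheory intervalIntegral Real Set

/-! With `d = l₂ - l₁` the noise cancels, and
`sinh x - sinh y = 2 sinh ((x - y)/2) cosh ((x + y)/2)` turns the equation for `d` into
`d' = -2 k sinh (d/2)` with `k = 2ε cosh ((l₁ + l₂)/2) ≥ 2ε`. As
`sinh (d/2) = 2 sinh (d/4) cosh (d/4)`, the function `g = tanh (d/4)` solves the linear equation
`g' = -k g`, hence `tanh (d t / 4) = exp (-∫_{s₀}^t k) tanh (d s₀ / 4)`: the sign of `d` is
preserved and the factor is at most `exp (-2ε (t - s₀))`. -/

theorem Real.sinh_sub_sinh (x y : ℝ) :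
    sinh x - sinh y = 2 * sinh ((x - y) / 2) * cosh ((x + y) / 2) := by
  have hx : x = (x + y) / 2 + (x - y) / 2 := by ring
  have hy : y = (x + y) / 2 - (x - y) / 2 := by ring
  set p := (x + y) / 2
  set q := (x - y) / 2
  rw [hx, hy, sinh_add, sinh_sub]
  ring

theorem Real.hasDerivAt_tanh (x : ℝ) : HasDerivAt tanh (1 / cosh x ^ 2) x := by
  have h := (hasDerivAt_sinh x).div (hasDerivAt_cosh x) (cosh_pos x).ne'
  refine (h.congr_of_eventuallyEq (.of_forall tanh_eq_sinh_div_cosh)).congr_deriv ?_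
  rw [← cosh_sq_sub_sinh_sq x]
  ring

theorem Real.continuous_tanh : Continuous tanh :=
  continuous_iff_continuousAt.2 fun x => (hasDerivAt_tanh x).continuousAt

theorem Real.tanh_nonneg_iff {x : ℝ} : 0 ≤ tanh x ↔ 0 ≤ x := by
  rw [tanh_eq_sinh_div_cosh, le_div_iff₀ (cosh_pos x), zero_mul, sinh_nonneg_iff]

theorem ContinuousOn.integral_hasDerivWithinAt_Ici {f : ℝ → ℝ} {a b x : ℝ}
    (hf : ContinuousOn f (Icc a b)) (hx : x ∈ Ico a b) :
    HasDerivWithinAt (fun t => ∫ u in a..t, f u) (f x) (Ici x) x := by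
  have : Fact (x ∈ Icc a b) := ⟨Ico_subset_Icc_self hx⟩
  have hint : IntervalIntegrable f volume a x :=
    (hf.mono (Icc_subset_Icc_right hx.2.le)).intervalIntegrable_of_Icc hx.1
  exact (integral_hasDerivWithinAt_right hint
    (hf.stronglyMeasurableAtFilter_nhdsWithin measurableSet_Icc x)
    (hf x this.out)).mono_of_mem_nhdsWithin (Icc_mem_nhdsGE_of_mem hx)

theorem eq_exp_neg_integral_mul_of_hasDerivWithinAt {g k : ℝ → ℝ} {a b : ℝ} (hab : a ≤ b)
    (hg : ContinuousOn g (Icc a b)) (hk : ContinuousOn k (Icc a b))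
    (hderiv : ∀ x ∈ Ico a b, HasDerivWithinAt g (-(k x * g x)) (Ici x) x) :
    g b = exp (-∫ u in a..b, k u) * g a := by
  set K : ℝ → ℝ := fun t => ∫ u in a..t, k u
  have hK : ContinuousOn K (Icc a b) := by
    simpa only [uIcc_of_le hab] using
      continuousOn_primitive_interval' (hk.intervalIntegrable_of_Icc hab) left_mem_uIcc
  have hconst := constant_of_has_deriv_right_zero (f := fun t => g t * exp (K t))
    (hg.mul (continuous_exp.comp_continuousOn hK))
    (fun x hx => by
      refine ((hderiv x hx).mul (hk.integral_hasDerivWithinAt_Ici hx).exp).congr_deriv ?_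
      ring)
    b (right_mem_Icc.2 hab)
  simp only [K, integral_same, exp_zero, mul_one] at hconst
  rw [exp_neg, ← hconst]
  field_simp

theorem tanh_quarter_eq_of_integral_eq {d k : ℝ → ℝ} {a b : ℝ} (hab : a ≤ b)
    (hd : ContinuousOn d (Icc a b)) (hk : ContinuousOn k (Icc a b))
    (heq : ∀ t ∈ Icc a b, d t = d a - 2 * ∫ u in a..t, k u * sinh (d u / 2)) :
    tanh (d b / 4) = exp (-∫ u in a..b, k u) * tanh (d a / 4) := by
  refine eq_exp_neg_integral_mul_of_hasDerivWithinAt hab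
    (continuous_tanh.comp_continuousOn (hd.div_const 4)) hk fun x hx => ?_
  have hprim := ContinuousOn.integral_hasDerivWithinAt_Ici
    (hk.mul (continuous_sinh.comp_continuousOn (hd.div_const 2))) hx
  have hd' : HasDerivWithinAt d (-(2 * (k x * sinh (d x / 2)))) (Ici x) x :=
    ((hprim.const_mul 2).const_sub (d a)).congr_of_eventuallyEq
      (Filter.eventually_of_mem (Icc_mem_nhdsGE_of_mem hx) heq) (heq x (Ico_subset_Icc_self hx))
  refine ((hasDerivAt_tanh (d x / 4)).comp_hasDerivWithinAt x (hd'.div_const 4)).congr_deriv ?_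
  rw [show d x / 2 = 2 * (d x / 4) by ring, sinh_two_mul, Function.comp_apply,
    tanh_eq_sinh_div_cosh]
  field_simp
  ring

theorem sub_eq_sub_integral_of_pathwise {ε s t : ℝ} {b l₁ l₂ : ℝ → ℝ} (hst : s ≤ t)
    (hl₁ : ContinuousOn l₁ (Icc s t)) (hl₂ : ContinuousOn l₂ (Icc s t))
    (heq₁ : l₁ t = l₁ s + 2 * (b t - b s) - 2 * ε * ∫ u in s..t, sinh (l₁ u))
    (heq₂ : l₂ t = l₂ s + 2 * (b t - b s) - 2 * ε * ∫ u in s..t, sinh (l₂ u)) :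
    l₂ t - l₁ t = l₂ s - l₁ s -
      2 * ∫ u in s..t, 2 * ε * cosh ((l₂ u + l₁ u) / 2) * sinh ((l₂ u - l₁ u) / 2) := by
  have hkernel : ∀ u, 2 * ε * cosh ((l₂ u + l₁ u) / 2) * sinh ((l₂ u - l₁ u) / 2)
      = ε * (sinh (l₂ u) - sinh (l₁ u)) := fun u => by rw [sinh_sub_sinh]; ring
  have hint : ∀ l : ℝ → ℝ, ContinuousOn l (Icc s t) →
      IntervalIntegrable (fun u => sinh (l u)) volume s t := fun l hl =>
    (continuous_sinh.comp_continuousOn hl).intervalIntegrable_of_Icc hst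
  simp_rw [hkernel]
  rw [intervalIntegral.integral_const_mul, integral_sub (hint l₂ hl₂) (hint l₁ hl₁),
    heq₁, heq₂]
  ring

theorem exponential_contraction_general
    (ε a : ℝ) (hε : 0 < ε)
    (b l₁ l₂ : ℝ → ℝ)
    (hl₁ : ContinuousOn l₁ (Set.Ici a)) (hl₂ : ContinuousOn l₂ (Set.Ici a))
    (heq₁ : ∀ s t : ℝ, a ≤ s → s ≤ t →
      l₁ t = l₁ s + 2 * (b t - b s) - 2 * ε * ∫ u in s..t, Real.sinh (l₁ u))
    (heq₂ : ∀ s t : ℝ, a ≤ s → s ≤ t →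
      l₂ t = l₂ s + 2 * (b t - b s) - 2 * ε * ∫ u in s..t, Real.sinh (l₂ u))
    (s₀ : ℝ) (hs₀ : a ≤ s₀) (hinit : l₁ s₀ ≤ l₂ s₀) :
    ∀ t : ℝ, s₀ ≤ t →
      l₁ t ≤ l₂ t ∧
      Real.tanh ((l₂ t - l₁ t) / 4)
        ≤ Real.exp (-2 * ε * (t - s₀)) * Real.tanh ((l₂ s₀ - l₁ s₀) / 4) := by
  intro T hT
  have hsub : ∀ t, Icc s₀ t ⊆ Ici a := fun _ _ hu => hs₀.trans hu.1
  set k : ℝ → ℝ := fun u => 2 * ε * cosh ((l₂ u + l₁ u) / 2)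
  have hk : ContinuousOn k (Icc s₀ T) := continuousOn_const.mul
    (continuous_cosh.comp_continuousOn (((hl₂.add hl₁).div_const 2).mono (hsub T)))
  have htanh := tanh_quarter_eq_of_integral_eq (d := fun t => l₂ t - l₁ t) hT
    ((hl₂.sub hl₁).mono (hsub T)) hk fun t ht =>
      sub_eq_sub_integral_of_pathwise ht.1 (hl₁.mono (hsub t)) (hl₂.mono (hsub t))
        (heq₁ s₀ t hs₀ ht.1) (heq₂ s₀ t hs₀ ht.1)
  have hinit' : 0 ≤ tanh ((l₂ s₀ - l₁ s₀) / 4) := tanh_nonneg_iff.2 (by linarith)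
  have hdecay : exp (-∫ u in s₀..T, k u) ≤ exp (-2 * ε * (T - s₀)) := by
    have hmono := integral_mono_on hT (intervalIntegrable_const (μ := volume))
      (hk.intervalIntegrable_of_Icc hT) fun u _ =>
        le_mul_of_one_le_right (by positivity : (0 : ℝ) ≤ 2 * ε) (one_le_cosh _)
    rw [intervalIntegral.integral_const, smul_eq_mul] at hmono
    exact exp_le_exp.2 (by linarith)
  refine ⟨?_, htanh ▸ mul_le_mul_of_nonneg_right hdecay hinit'⟩
  linarith [tanh_nonneg_iff.1 (htanh ▸ mul_nonneg (exp_pos _).le hinit')]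

/-- Exponential contraction of two solutions (pathwise form): if `l¹, l²` are continuous
on `[a, ∞)` and both satisfy `l t = l s + 2 (b t − b s) − 2ε ∫_s^t sinh (l u) du` for all
`a ≤ s ≤ t`, and `l¹ s₀ ≤ l² s₀` for some `s₀ ≥ a`, then for every `t ≥ s₀` one has
`l¹ t ≤ l² t` and `tanh ((l² t − l¹ t)/4) ≤ e^{−2ε(t − s₀)} tanh ((l² s₀ − l¹ s₀)/4)`. -/
theorem exponential_contraction
    (ε a : ℝ) (hε : 0 < ε)
    (b l₁ l₂ : ℝ → ℝ)
    (hb : ContinuousOn b (Set.Ici a))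
    (hl₁ : ContinuousOn l₁ (Set.Ici a)) (hl₂ : ContinuousOn l₂ (Set.Ici a))
    (heq₁ : ∀ s t : ℝ, a ≤ s → s ≤ t →
      l₁ t = l₁ s + 2 * (b t - b s) - 2 * ε * ∫ u in s..t, Real.sinh (l₁ u))
    (heq₂ : ∀ s t : ℝ, a ≤ s → s ≤ t →
      l₂ t = l₂ s + 2 * (b t - b s) - 2 * ε * ∫ u in s..t, Real.sinh (l₂ u))
    (s₀ : ℝ) (hs₀ : a ≤ s₀) (hinit : l₁ s₀ ≤ l₂ s₀) :
    ∀ t : ℝ, s₀ ≤ t →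
      l₁ t ≤ l₂ t ∧
      Real.tanh ((l₂ t - l₁ t) / 4)
        ≤ Real.exp (-2 * ε * (t - s₀)) * Real.tanh ((l₂ s₀ - l₁ s₀) / 4) :=
  exponential_contraction_general ε a hε b l₁ l₂ hl₁ hl₂ heq₁ heq₂ s₀ hs₀ hinit
end

section
/- Hard-wall-type a priori upper bound: let Γ ∈ ℝ, ε > 0, t > 0, and let b : [0, t] → ℝ be continuous. Let ℓ : [0, t] → ℝ be continuous with ℓ_s = ℓ_0 + 2(b_s − b_0) − 2ε ∫₀^s sinh(ℓ_u) du for all s ∈ [0, t]. Let F > 0, a > 0 and λ > 0 be such that (1) |b_s − b_{s'}| ≤ λ whenever s, s' ∈ [0, t] satisfy |s − s'| ≤ a, and (2) λ ≤ ε a sinh(Γ + F). If ℓ_0 ≤ Γ + F, then sup_{s ∈ [0, t]} ℓ_s ≤ Γ + F + 2λ. -/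
open MeasureTheory intervalIntegral Real

/-- Hard-wall-type a priori upper bound: if `ℓ` solves
`ℓ s = ℓ 0 + 2 (b s − b 0) − 2ε ∫₀^s sinh (ℓ u) du` on `[0, t]` with `b` continuous,
`|b s − b s'| ≤ λ` whenever `|s − s'| ≤ a` in `[0, t]`, `λ ≤ ε a sinh (Γ + F)`, and
`ℓ 0 ≤ Γ + F`, then `ℓ s ≤ Γ + F + 2λ` for every `s ∈ [0, t]`. -/
theorem hard_wall_upper_bound
    (Γ ε t : ℝ) (hε : 0 < ε) (ht : 0 < t)
    (b ℓ : ℝ → ℝ)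
    (hb : ContinuousOn b (Set.Icc 0 t)) (hℓ : ContinuousOn ℓ (Set.Icc 0 t))
    (hℓeq : ∀ s ∈ Set.Icc (0:ℝ) t,
      ℓ s = ℓ 0 + 2 * (b s - b 0) - 2 * ε * ∫ u in (0:ℝ)..s, Real.sinh (ℓ u))
    (F a lam : ℝ) (hF : 0 < F) (ha : 0 < a) (hlam : 0 < lam)
    (hmod : ∀ s ∈ Set.Icc (0:ℝ) t, ∀ s' ∈ Set.Icc (0:ℝ) t,
      |s - s'| ≤ a → |b s - b s'| ≤ lam)
    (hlam_le : lam ≤ ε * a * Real.sinh (Γ + F))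
    (hinit : ℓ 0 ≤ Γ + F) :
    ∀ s ∈ Set.Icc (0:ℝ) t, ℓ s ≤ Γ + F + 2 * lam := by
  set M : ℝ := Γ + F + 2 * lam with hM
  set σ : ℝ := Real.sinh (Γ + F) with hσ
  have hσpos : 0 < σ := by nlinarith [mul_pos hε ha]
  -- continuity and integrability of sinh ∘ ℓ
  have hgc : ContinuousOn (fun u => Real.sinh (ℓ u)) (Set.Icc 0 t) :=
    Real.continuous_sinh.comp_continuousOn hℓ
  have hint : ∀ x ∈ Set.Icc (0:ℝ) t, ∀ y ∈ Set.Icc (0:ℝ) t,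
      IntervalIntegrable (fun u => Real.sinh (ℓ u)) volume x y := by
    intro x hx y hy
    refine (hgc.mono ?_).intervalIntegrable
    rw [← Set.uIcc_of_le ht.le]
    exact Set.uIcc_subset_uIcc (by rwa [Set.uIcc_of_le ht.le]) (by rwa [Set.uIcc_of_le ht.le])
  -- difference form of the integral equation
  have hdiff : ∀ x ∈ Set.Icc (0:ℝ) t, ∀ y ∈ Set.Icc (0:ℝ) t,
      ℓ y - ℓ x = 2 * (b y - b x)
        - 2 * ε * ∫ u in x..y, Real.sinh (ℓ u) := by
    intro x hx y hy
    have h0 : (0:ℝ) ∈ Set.Icc (0:ℝ) t := by constructor <;> linarith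
    have hsub : (∫ u in (0:ℝ)..y, Real.sinh (ℓ u)) - ∫ u in (0:ℝ)..x, Real.sinh (ℓ u)
        = ∫ u in x..y, Real.sinh (ℓ u) :=
      integral_interval_sub_left (hint 0 h0 y hy) (hint 0 h0 x hx)
    have hex := hℓeq x hx
    have hey := hℓeq y hy
    linear_combination hey - hex - 2 * ε * hsub
  by_contra hcon
  push_neg at hcon
  obtain ⟨s₁, hs₁mem, hs₁⟩ := hcon
  -- first hitting time of level M
  set S : Set ℝ := Set.Icc 0 t ∩ ℓ ⁻¹' Set.Ici M with hS
  have hSclosed : IsClosed S := hℓ.preimage_isClosed_of_isClosed isClosed_Icc isClosed_Ici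
  have hSne : S.Nonempty := ⟨s₁, hs₁mem, hs₁.le⟩
  have hSbdd : BddBelow S := ⟨0, fun x hx => hx.1.1⟩
  set sstar : ℝ := sInf S with hsstar
  have hsstarS : sstar ∈ S := hSclosed.csInf_mem hSne hSbdd
  have hsmem : sstar ∈ Set.Icc (0:ℝ) t := hsstarS.1
  have hsM : M ≤ ℓ sstar := hsstarS.2
  have hbefore : ∀ u, 0 ≤ u → u < sstar → ℓ u < M := by
    intro u hu0 hus
    by_contra h
    push_neg at h
    have : u ∈ S := ⟨⟨hu0, le_trans hus.le hsmem.2⟩, h⟩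
    exact absurd (csInf_le hSbdd this) (not_le.mpr hus)
  -- last time before sstar at level ≤ Γ + F
  set T : Set ℝ := Set.Icc 0 sstar ∩ ℓ ⁻¹' Set.Iic (Γ + F) with hT
  have hTclosed : IsClosed T :=
    (hℓ.mono (Set.Icc_subset_Icc le_rfl hsmem.2)).preimage_isClosed_of_isClosed
      isClosed_Icc isClosed_Iic
  have hTne : T.Nonempty := ⟨0, ⟨le_rfl, hsmem.1⟩, hinit⟩
  have hTbdd : BddAbove T := ⟨sstar, fun x hx => hx.1.2⟩
  set s₀ : ℝ := sSup T with hs₀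
  have hs₀T : s₀ ∈ T := hTclosed.csSup_mem hTne hTbdd
  have hs₀mem : s₀ ∈ Set.Icc (0:ℝ) sstar := hs₀T.1
  have hs₀le : ℓ s₀ ≤ Γ + F := hs₀T.2
  have hs₀lt : s₀ < sstar := by
    rcases lt_or_eq_of_le hs₀mem.2 with h | h
    · exact h
    · exfalso; rw [h] at hs₀le; nlinarith
  have hs₀Icc : s₀ ∈ Set.Icc (0:ℝ) t := ⟨hs₀mem.1, le_trans hs₀mem.2 hsmem.2⟩
  -- on (s₀, sstar], ℓ > Γ + F
  have hafter : ∀ u, s₀ < u → u ≤ sstar → Γ + F < ℓ u := by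
    intro u h1 h2
    by_contra h
    push_neg at h
    have : u ∈ T := ⟨⟨le_trans hs₀mem.1 h1.le, h2⟩, h⟩
    exact absurd (le_csSup hTbdd this) (not_le.mpr h1)
  -- by continuity, ℓ s₀ ≥ Γ + F, hence ℓ ≥ Γ+F on [s₀, sstar]
  have hs₀ge : Γ + F ≤ ℓ s₀ := by
    have hc : ContinuousWithinAt ℓ (Set.Icc 0 t) s₀ := hℓ s₀ hs₀Icc
    have hsub : Set.Ioc s₀ sstar ⊆ Set.Icc 0 t := fun u hu =>
      ⟨le_trans hs₀mem.1 hu.1.le, le_trans hu.2 hsmem.2⟩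
    have htend : Filter.Tendsto ℓ (nhdsWithin s₀ (Set.Ioc s₀ sstar)) (nhds (ℓ s₀)) :=
      hc.tendsto.mono_left (nhdsWithin_mono _ hsub)
    have hev : ∀ᶠ u in nhdsWithin s₀ (Set.Ioc s₀ sstar), Γ + F ≤ ℓ u := by
      filter_upwards [self_mem_nhdsWithin] with u hu
      exact (hafter u hu.1 hu.2).le
    haveI := left_nhdsWithin_Ioc_neBot hs₀lt
    exact ge_of_tendsto htend hev
  have hlower : ∀ u ∈ Set.Icc s₀ sstar, Γ + F ≤ ℓ u := by
    intro u hu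
    rcases eq_or_lt_of_le hu.1 with h | h
    · rw [← h]; exact hs₀ge
    · exact (hafter u h hu.2).le
  -- the comparison point
  set c : ℝ := max s₀ (sstar - a) with hc
  have hcge : s₀ ≤ c := le_max_left _ _
  have hclt : c < sstar := max_lt hs₀lt (by linarith)
  have hcIcc : c ∈ Set.Icc (0:ℝ) t := ⟨le_trans hs₀mem.1 hcge, le_trans hclt.le hsmem.2⟩
  have hgap : sstar - c ≤ a := by
    have := le_max_right s₀ (sstar - a); simp only [hc]; linarith
  -- modulus of continuity bound
  have hbbd : |b sstar - b c| ≤ lam := by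
    refine hmod sstar hsmem c hcIcc ?_
    rw [abs_of_nonneg (by linarith)]; exact hgap
  -- integral lower bound
  have hintlb : (sstar - c) * σ ≤ ∫ u in c..sstar, Real.sinh (ℓ u) := by
    have hconst : (∫ u in c..sstar, σ) = (sstar - c) * σ := by
      rw [intervalIntegral.integral_const, smul_eq_mul]
    rw [← hconst]
    refine intervalIntegral.integral_mono_on hclt.le
      (intervalIntegrable_const) (hint c hcIcc sstar hsmem) ?_
    intro u hu
    rw [hσ, Real.sinh_le_sinh]
    exact hlower u ⟨le_trans hcge hu.1, hu.2⟩
  -- key inequality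
  have hkey : ℓ sstar - ℓ c ≤ 2 * lam - 2 * ε * ((sstar - c) * σ) := by
    have h := hdiff c hcIcc sstar hsmem
    have h2 : b sstar - b c ≤ lam := le_trans (le_abs_self _) hbbd
    nlinarith [hintlb]
  -- conclude by cases
  rcases le_or_gt (sstar - a) s₀ with hcase | hcase
  · -- c = s₀
    have hceq : c = s₀ := max_eq_left hcase
    have h1 : ℓ sstar - ℓ c ≥ 2 * lam := by
      rw [hceq]; have := hs₀le; simp only [hM] at hsM; linarith
    rw [hceq] at hkey
    have hpos : 0 < sstar - s₀ := by linarith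
    rw [hceq] at hgap hclt
    nlinarith [hkey, h1, hpos, hσpos, hε]
  · -- c = sstar - a
    have hceq : c = sstar - a := max_eq_right hcase.le
    have hcl : ℓ c < M := hbefore c hcIcc.1 hclt
    have hgap2 : sstar - c = a := by rw [hceq]; ring
    rw [hgap2] at hkey
    nlinarith [hkey, hcl, hsM, hlam_le, hε]
end

section
/- Structure of the Γ-extrema of a path: let f : ℝ → ℝ be continuous and assume (H1) no two distinct local maxima of f have the same value and no two distinct local minima of f have the same value, and (H2) limsup_{t→+∞} f(t) = limsup_{t→−∞} f(t) = +∞ and liminf_{t→+∞} f(t) = liminf_{t→−∞} f(t) = −∞. Fix Γ > 0. Then the set of Γ-maxima and the set of Γ-minima of f are disjoint, locally finite (discrete) and unbounded above and below; they alternate, in the sense that between any two consecutive Γ-maxima there is exactly one Γ-minimum and between any two consecutive Γ-minima there is exactly one Γ-maximum; if u is a Γ-minimum and u₁ < u < u₂ are the two adjacent Γ-maxima, then the pair (u₁, u₂) testifies that u is a Γ-minimum, and symmetrically for Γ-maxima; finally, if u < u′ are consecutive Γ-extrema with u a Γ-maximum (so u′ a Γ-minimum), then sup_{u ≤ r ≤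 s ≤ u′} (f(s) − f(r)) ≤ Γ, while if u is a Γ-minimum (so u′ a Γ-maximum), then sup_{u ≤ r ≤ s ≤ u′} (f(r) − f(s)) ≤ Γ. -/
/-- `u` is a local maximum of `f`: there are `a < u < b` with `f u = sup_{[a,b]} f`. -/
def IsLocMaxPt (f : ℝ → ℝ) (u : ℝ) : Prop :=
  ∃ a b : ℝ, a < u ∧ u < b ∧ ∀ t ∈ Set.Icc a b, f t ≤ f u

/-- The pair `(a, b)` testifies that `u` is a `Γ`-maximum of `f`. -/
def TestifiesMax (f : ℝ → ℝ) (Γ u a b : ℝ) : Prop :=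
  a < u ∧ u < b ∧ (∀ t ∈ Set.Icc a b, f t ≤ f u) ∧ f a < f u - Γ ∧ f b < f u - Γ

/-- `u` is a `Γ`-maximum of `f`. -/
def IsGMax (f : ℝ → ℝ) (Γ u : ℝ) : Prop :=
  ∃ a b : ℝ, TestifiesMax f Γ u a b

/-- `u` is a `Γ`-minimum of `f`, i.e. a `Γ`-maximum of `−f`. -/
def IsGMin (f : ℝ → ℝ) (Γ u : ℝ) : Prop :=
  IsGMax (fun t => -f t) Γ u

lemma isGMin_neg {g : ℝ → ℝ} {Γ u : ℝ} : IsGMin (fun t => -g t) Γ u ↔ IsGMax g Γ u := by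
  constructor
  · rintro ⟨a, b, h1, h2, h3, h4, h5⟩
    refine ⟨a, b, h1, h2, fun t ht => ?_, ?_, ?_⟩
    · have := h3 t ht; simpa using this
    · simpa using h4
    · simpa using h5
  · rintro ⟨a, b, h1, h2, h3, h4, h5⟩
    refine ⟨a, b, h1, h2, fun t ht => ?_, ?_, ?_⟩
    · have := h3 t ht; simpa using this
    · simpa using h4
    · simpa using h5

lemma isLocMaxPt_negneg {g : ℝ → ℝ} {u : ℝ} :
    IsLocMaxPt (fun t => -(-g t)) u ↔ IsLocMaxPt g u := by
  constructor <;> rintro ⟨a, b, h1, h2, h3⟩ <;>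
    exact ⟨a, b, h1, h2, fun t ht => by have := h3 t ht; simpa using this⟩

lemma flat_false {g : ℝ → ℝ} {p q : ℝ}
    (hd : ∀ u v : ℝ, IsLocMaxPt g u → IsLocMaxPt g v → u ≠ v → g u ≠ g v)
    (hpq : p < q) (hc : ∀ t ∈ Set.Icc p q, g t = g p) : False := by
  have h3 : 0 < (q - p) / 3 := by linarith
  set r := p + (q - p) / 3 with hr
  set s := p + 2 * ((q - p) / 3) with hs
  have hrq : r < q := by rw [hr]; linarith
  have hsq : s < q := by rw [hs]; linarith
  have hpr : p < r := by rw [hr]; linarith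
  have hps : p < s := by rw [hs]; linarith
  have lm : ∀ x, p < x → x < q → IsLocMaxPt g x := by
    intro x h1 h2
    exact ⟨p, q, h1, h2, fun t ht => by
      rw [hc t ht, hc x ⟨le_of_lt h1, le_of_lt h2⟩]⟩
  have hrs : r ≠ s := by rw [hr, hs]; intro h; nlinarith [h3]
  exact hd r s (lm r hpr hrq) (lm s hps hsq) hrs
    (by rw [hc r ⟨le_of_lt hpr, le_of_lt hrq⟩, hc s ⟨le_of_lt hps, le_of_lt hsq⟩])

lemma gap {g : ℝ → ℝ} {Γ : ℝ} (hΓ : 0 < Γ)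
    (hd : ∀ u v : ℝ, IsLocMaxPt g u → IsLocMaxPt g v → u ≠ v → g u ≠ g v)
    {u v : ℝ} (hu : IsGMax g Γ u) (hv : IsGMax g Γ v) (huv : u < v) :
    ∃ w, u < w ∧ w < v ∧ g w < min (g u) (g v) - Γ := by
  by_contra hcon
  push_neg at hcon
  obtain ⟨a, b, hau, hub, hmaxu, hfa, hfb⟩ := hu
  obtain ⟨c, d, hcv, hvd, hmaxv, hfc, hfd⟩ := hv
  have hIcc : ∀ w ∈ Set.Icc u v, min (g u) (g v) - Γ ≤ g w := by
    rintro w ⟨h1, h2⟩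
    rcases eq_or_lt_of_le h1 with h1 | h1
    · rw [← h1]; have := min_le_left (g u) (g v); linarith
    rcases eq_or_lt_of_le h2 with h2 | h2
    · rw [h2]; have := min_le_right (g u) (g v); linarith
    · exact hcon w h1 h2
  have hne : g u ≠ g v :=
    hd u v ⟨a, b, hau, hub, hmaxu⟩ ⟨c, d, hcv, hvd, hmaxv⟩ (ne_of_lt huv)
  rcases lt_or_gt_of_ne hne with hlt | hgt
  · -- g u < g v : use b, the right endpoint of u's testifier
    have hbv : v < b := by
      by_contra hb
      push_neg at hb
      have h1 := hIcc b ⟨le_of_lt hub, hb⟩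
      rw [min_eq_left (le_of_lt hlt)] at h1
      linarith
    have : g v ≤ g u := hmaxu v ⟨le_of_lt (lt_trans hau huv), le_of_lt hbv⟩
    linarith
  · -- g v < g u : use c
    have hcu : c < u := by
      by_contra hc
      push_neg at hc
      have h1 := hIcc c ⟨hc, le_of_lt hcv⟩
      rw [min_eq_right (le_of_lt hgt)] at h1
      linarith
    have : g u ≤ g v := hmaxv u ⟨le_of_lt hcu, le_of_lt (lt_trans huv hvd)⟩
    linarith

lemma exists_min_between {g : ℝ → ℝ} {Γ : ℝ} (hg : Continuous g) (hΓ : 0 < Γ)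
    (hd : ∀ u v : ℝ, IsLocMaxPt g u → IsLocMaxPt g v → u ≠ v → g u ≠ g v)
    {u₁ u₂ : ℝ} (h1 : IsGMax g Γ u₁) (h2 : IsGMax g Γ u₂) (h12 : u₁ < u₂) :
    ∃ v, u₁ < v ∧ v < u₂ ∧ IsGMin g Γ v ∧ (∀ t ∈ Set.Icc u₁ u₂, g v ≤ g t) ∧
      g v < g u₁ - Γ ∧ g v < g u₂ - Γ := by
  obtain ⟨w, hw1, hw2, hw3⟩ := gap hΓ hd h1 h2 h12
  obtain ⟨v, hvmem, hvmin⟩ := isCompact_Icc.exists_isMinOn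
    (Set.nonempty_Icc.mpr (le_of_lt h12)) hg.continuousOn
  have hvw : g v ≤ g w := hvmin ⟨le_of_lt hw1, le_of_lt hw2⟩
  have hv1 : g v < g u₁ - Γ := by
    have := min_le_left (g u₁) (g u₂); linarith
  have hv2 : g v < g u₂ - Γ := by
    have := min_le_right (g u₁) (g u₂); linarith
  have hu1v : u₁ < v := lt_of_le_of_ne hvmem.1 (by intro h; rw [← h] at hv1; linarith)
  have hvu2 : v < u₂ := lt_of_le_of_ne hvmem.2 (by intro h; rw [h] at hv2; linarith)
  refine ⟨v, hu1v, hvu2, ⟨u₁, u₂, hu1v, hvu2, fun t ht => ?_, ?_, ?_⟩,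
    fun t ht => hvmin ht, hv1, hv2⟩
  · have := hvmin ht; simp only [neg_le_neg_iff]; exact this
  · simp only []; linarith
  · simp only []; linarith

lemma between {g : ℝ → ℝ} {Γ : ℝ} (hg : Continuous g) (hΓ : 0 < Γ)
    (hd : ∀ u v : ℝ, IsLocMaxPt g u → IsLocMaxPt g v → u ≠ v → g u ≠ g v)
    (hd' : ∀ u v : ℝ, IsLocMaxPt (fun t => -g t) u → IsLocMaxPt (fun t => -g t) v →
      u ≠ v → -g u ≠ -g v)
    {u₁ u₂ : ℝ} (h1 : IsGMax g Γ u₁) (h2 : IsGMax g Γ u₂) (h12 : u₁ < u₂)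
    (hno : ∀ w, u₁ < w → w < u₂ → ¬ IsGMax g Γ w) :
    ∃ v, u₁ < v ∧ v < u₂ ∧ IsGMin g Γ v ∧ (∀ t ∈ Set.Icc u₁ u₂, g v ≤ g t) ∧
      g v < g u₁ - Γ ∧ g v < g u₂ - Γ ∧
      (∀ v', IsGMin g Γ v' → u₁ < v' → v' < u₂ → v' = v) := by
  obtain ⟨v, hv1, hv2, hv3, hv4, hv5, hv6⟩ := exists_min_between hg hΓ hd h1 h2 h12
  refine ⟨v, hv1, hv2, hv3, hv4, hv5, hv6, ?_⟩
  intro v' hv' hv'1 hv'2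
  by_contra hne
  -- two distinct Γ-minima in (u₁, u₂); a Γ-max appears strictly between them
  have key : ∀ x y : ℝ, IsGMin g Γ x → IsGMin g Γ y → u₁ < x → y < u₂ → x < y → False := by
    intro x y hx hy hx1 hy2 hxy
    obtain ⟨m, hm1, hm2, hm3, -, -, -⟩ :=
      exists_min_between (g := fun t => -g t) hg.neg hΓ
        (by intro p q hp hq hpq; exact hd' p q hp hq hpq) hx hy hxy
    exact hno m (lt_trans hx1 hm1) (lt_trans hm2 hy2) (isGMin_neg.mp hm3)
  rcases lt_or_gt_of_ne hne with h | h
  · exact absurd (key v' v hv' hv3 hv'1 hv2 h) not_false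
  · exact absurd (key v v' hv3 hv' hv1 hv'2 h) not_false

lemma no_rise {g : ℝ → ℝ} {Γ : ℝ} (hg : Continuous g) (hΓ : 0 < Γ)
    {u u' : ℝ} (hu : IsGMax g Γ u) (hu' : IsGMin g Γ u') (huu : u < u')
    (hno : ∀ w, u < w → w < u' → ¬ (IsGMax g Γ w ∨ IsGMin g Γ w)) :
    ∀ r s : ℝ, u ≤ r → r ≤ s → s ≤ u' → g s - g r ≤ Γ := by
  intro r s hur hrs hsu
  by_contra hcon
  push_neg at hcon
  have hrs' : r < s := by
    rcases eq_or_lt_of_le hrs with h | h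
    · rw [h] at hcon; linarith
    · exact h
  have hus : u ≤ s := le_trans hur hrs
  by_cases hA : ∃ t ∈ Set.Icc u s, g t < g u - Γ
  · -- Case A: the argmin of g on [u,s] is a Γ-minimum strictly between u and u'
    obtain ⟨v, hvmem, hvmin⟩ := isCompact_Icc.exists_isMinOn
      (Set.nonempty_Icc.mpr hus) hg.continuousOn
    obtain ⟨t₀, ht₀mem, ht₀⟩ := hA
    have hv1 : g v < g u - Γ := lt_of_le_of_lt (hvmin ht₀mem) ht₀
    have hvr : g v ≤ g r := hvmin ⟨hur, hrs⟩
    have hvs : g v < g s - Γ := by linarith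
    have huv : u < v := lt_of_le_of_ne hvmem.1 (by intro h; rw [← h] at hv1; linarith)
    have hvs' : v < s := lt_of_le_of_ne hvmem.2 (by intro h; rw [h] at hvs; linarith)
    refine hno v huv (lt_of_lt_of_le hvs' hsu) (Or.inr ?_)
    refine ⟨u, s, huv, hvs', fun t ht => ?_, ?_, ?_⟩
    · have := hvmin ht; simp only [neg_le_neg_iff]; exact this
    · simp only []; linarith
    · simp only []; linarith
  · push_neg at hA
    -- Case B: the argmax of g on [u,u'] is a Γ-maximum strictly between u and u'
    obtain ⟨M, hMmem, hMmax⟩ := isCompact_Icc.exists_isMaxOn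
      (Set.nonempty_Icc.mpr (le_of_lt huu)) hg.continuousOn
    have hMs : g s ≤ g M := hMmax ⟨hus, hsu⟩
    have hrlow : g u - Γ ≤ g r := hA r ⟨hur, hrs⟩
    have hMu : g u < g M := by linarith
    obtain ⟨c, d, hcu', hu'd, hminmax, hgc, hgd⟩ := hu'
    have hminmax' : ∀ t ∈ Set.Icc c d, g u' ≤ g t := by
      intro t ht; have := hminmax t ht; simpa using this
    have hgc' : g u' + Γ < g c := by
      have : -g c < -g u' - Γ := hgc; linarith
    obtain ⟨A, B, hAu, huB, hmaxu, hgA, hgB⟩ := hu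
    by_cases hsub : g u' < g M - Γ
    · have hMneu : u < M := lt_of_le_of_ne hMmem.1 (by intro h; rw [← h] at hMu; linarith)
      have hMneu' : M < u' := lt_of_le_of_ne hMmem.2
        (by intro h; rw [h] at hsub; linarith)
      refine hno M hMneu hMneu' (Or.inl ⟨A, u', lt_trans hAu hMneu, hMneu', ?_, ?_, ?_⟩)
      · rintro t ⟨ht1, ht2⟩
        by_cases htu : t ≤ u
        · have : g t ≤ g u := hmaxu t ⟨ht1, le_trans htu (le_of_lt huB)⟩
          linarith
        · push_neg at htu
          exact hMmax ⟨le_of_lt htu, ht2⟩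
      · linarith
      · linarith
    · push_neg at hsub
      have hcu : c < u := by
        by_contra h
        push_neg at h
        have hc_le : g c ≤ g M := hMmax ⟨h, le_of_lt hcu'⟩
        linarith
      have hu_ge : g u' ≤ g u := hminmax' u ⟨le_of_lt hcu, le_of_lt (lt_trans huu hu'd)⟩
      by_cases hAc : c ≤ A
      · have : g u' ≤ g A :=
          hminmax' A ⟨hAc, le_of_lt (lt_trans (lt_trans hAu huu) hu'd)⟩
        linarith
      · push_neg at hAc
        have : g c ≤ g u := hmaxu c ⟨le_of_lt hAc, le_of_lt (lt_trans hcu huB)⟩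
        have hMle : g M ≤ g u' + Γ := by linarith
        linarith

lemma exists_gmax_right {g : ℝ → ℝ} {Γ : ℝ} (hg : Continuous g) (hΓ : 0 < Γ)
    (htop : ∀ M T : ℝ, ∃ t, T ≤ t ∧ M ≤ g t) (hbot : ∀ M T : ℝ, ∃ t, T ≤ t ∧ g t ≤ M)
    (T : ℝ) : ∃ u, IsGMax g Γ u ∧ T < u := by
  obtain ⟨a, hTa, hga⟩ := hbot 0 T
  obtain ⟨c, hac, hgc⟩ := htop (Γ + 1) a
  obtain ⟨b, hcb, hgb⟩ := hbot 0 (c + 1)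
  have hab : a ≤ b := by linarith
  obtain ⟨v, hvmem, hvmax⟩ := isCompact_Icc.exists_isMaxOn
    (Set.nonempty_Icc.mpr hab) hg.continuousOn
  have hgv : Γ + 1 ≤ g v := le_trans hgc (hvmax ⟨hac, by linarith⟩)
  have hav : a < v := lt_of_le_of_ne hvmem.1 (by intro h; rw [← h] at hgv; linarith)
  have hvb : v < b := lt_of_le_of_ne hvmem.2 (by intro h; rw [h] at hgv; linarith)
  exact ⟨v, ⟨a, b, hav, hvb, fun t ht => hvmax ht, by linarith, by linarith⟩,
    lt_of_le_of_lt hTa hav⟩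

lemma exists_gmax_left {g : ℝ → ℝ} {Γ : ℝ} (hg : Continuous g) (hΓ : 0 < Γ)
    (htop : ∀ M T : ℝ, ∃ t, t ≤ T ∧ M ≤ g t) (hbot : ∀ M T : ℝ, ∃ t, t ≤ T ∧ g t ≤ M)
    (T : ℝ) : ∃ u, IsGMax g Γ u ∧ u < T := by
  obtain ⟨b, hTb, hgb⟩ := hbot 0 T
  obtain ⟨c, hcb, hgc⟩ := htop (Γ + 1) b
  obtain ⟨a, hac, hga⟩ := hbot 0 (c - 1)
  have hab : a ≤ b := by linarith
  obtain ⟨v, hvmem, hvmax⟩ := isCompact_Icc.exists_isMaxOn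
    (Set.nonempty_Icc.mpr hab) hg.continuousOn
  have hgv : Γ + 1 ≤ g v := le_trans hgc (hvmax ⟨by linarith, hcb⟩)
  have hav : a < v := lt_of_le_of_ne hvmem.1 (by intro h; rw [← h] at hgv; linarith)
  have hvb : v < b := lt_of_le_of_ne hvmem.2 (by intro h; rw [h] at hgv; linarith)
  exact ⟨v, ⟨a, b, hav, hvb, fun t ht => hvmax ht, by linarith, by linarith⟩,
    lt_of_lt_of_le hvb hTb⟩

lemma finite_of_separated {S : Set ℝ} {c d δ : ℝ} (hδ : 0 < δ) (hS : S ⊆ Set.Icc c d)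
    (hsep : ∀ x ∈ S, ∀ y ∈ S, x ≠ y → δ ≤ |x - y|) : S.Finite := by
  have hinj : Set.InjOn (fun x => ⌊(x - c) / δ⌋) S := by
    intro x hx y hy hxy
    by_contra hne
    have h1 := hsep x hx y hy hne
    have h2 : |(x - c) / δ - (y - c) / δ| < 1 :=
      Int.abs_sub_lt_one_of_floor_eq_floor hxy
    have h3 : (x - c) / δ - (y - c) / δ = (x - y) / δ := by ring
    rw [h3, abs_div, abs_of_pos hδ, div_lt_one hδ] at h2
    linarith
  have himg : (fun x => ⌊(x - c) / δ⌋) '' S ⊆ Set.Icc 0 ⌊(d - c) / δ⌋ := by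
    rintro n ⟨x, hx, rfl⟩
    obtain ⟨h1, h2⟩ := hS hx
    constructor
    · exact Int.floor_nonneg.mpr (div_nonneg (by linarith) (le_of_lt hδ))
    · exact Int.floor_le_floor (by gcongr)
  exact Set.Finite.of_finite_image ((Set.finite_Icc _ _).subset himg) hinj

/-- Structure of the `Γ`-extrema of a continuous path `f` such that (H1) no two distinct
local maxima (resp. minima) share the same value, and (H2) `f` oscillates to `±∞`
near `+∞` and near `−∞`: the sets of `Γ`-maxima and `Γ`-minima are disjoint, locally
finite, unbounded in both directions, they alternate, adjacent `Γ`-maxima testify that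
the `Γ`-minimum in between is a `Γ`-minimum (and vice versa), and between consecutive
`Γ`-extrema there is no rise (resp. drop) bigger than `Γ`. -/
theorem gamma_extrema_structure
    (f : ℝ → ℝ) (hf : Continuous f)
    (hdistinct_max : ∀ u v : ℝ, IsLocMaxPt f u → IsLocMaxPt f v → u ≠ v → f u ≠ f v)
    (hdistinct_min : ∀ u v : ℝ, IsLocMaxPt (fun t => -f t) u →
      IsLocMaxPt (fun t => -f t) v → u ≠ v → f u ≠ f v)
    (hlimsup_top : ∀ M T : ℝ, ∃ t, T ≤ t ∧ M ≤ f t)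
    (hliminf_top : ∀ M T : ℝ, ∃ t, T ≤ t ∧ f t ≤ M)
    (hlimsup_bot : ∀ M T : ℝ, ∃ t, t ≤ T ∧ M ≤ f t)
    (hliminf_bot : ∀ M T : ℝ, ∃ t, t ≤ T ∧ f t ≤ M)
    (Γ : ℝ) (hΓ : 0 < Γ) :
    -- the two sets are disjoint
    (∀ u : ℝ, ¬ (IsGMax f Γ u ∧ IsGMin f Γ u))
    -- local finiteness (discreteness)
    ∧ (∀ c d : ℝ, ({u | IsGMax f Γ u ∨ IsGMin f Γ u} ∩ Set.Icc c d).Finite)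
    -- unboundedness above and below of both sets
    ∧ (∀ T : ℝ, (∃ u, IsGMax f Γ u ∧ T < u) ∧ (∃ u, IsGMax f Γ u ∧ u < T)
        ∧ (∃ u, IsGMin f Γ u ∧ T < u) ∧ (∃ u, IsGMin f Γ u ∧ u < T))
    -- between two consecutive Γ-maxima there is exactly one Γ-minimum
    ∧ (∀ u₁ u₂ : ℝ, IsGMax f Γ u₁ → IsGMax f Γ u₂ → u₁ < u₂ →
        (∀ w, u₁ < w → w < u₂ → ¬ IsGMax f Γ w) →
        ∃! v : ℝ, IsGMin f Γ v ∧ u₁ < v ∧ v < u₂)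
    -- between two consecutive Γ-minima there is exactly one Γ-maximum
    ∧ (∀ u₁ u₂ : ℝ, IsGMin f Γ u₁ → IsGMin f Γ u₂ → u₁ < u₂ →
        (∀ w, u₁ < w → w < u₂ → ¬ IsGMin f Γ w) →
        ∃! v : ℝ, IsGMax f Γ v ∧ u₁ < v ∧ v < u₂)
    -- the two adjacent Γ-maxima testify that `u` is a Γ-minimum
    ∧ (∀ u u₁ u₂ : ℝ, IsGMin f Γ u → IsGMax f Γ u₁ → IsGMax f Γ u₂ →
        u₁ < u → u < u₂ → (∀ w, u₁ < w → w < u₂ → ¬ IsGMax f Γ w) →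
        TestifiesMax (fun t => -f t) Γ u u₁ u₂)
    -- the two adjacent Γ-minima testify that `u` is a Γ-maximum
    ∧ (∀ u u₁ u₂ : ℝ, IsGMax f Γ u → IsGMin f Γ u₁ → IsGMin f Γ u₂ →
        u₁ < u → u < u₂ → (∀ w, u₁ < w → w < u₂ → ¬ IsGMin f Γ w) →
        TestifiesMax f Γ u u₁ u₂)
    -- no rise larger than Γ between a Γ-maximum and the next Γ-minimum
    ∧ (∀ u u' : ℝ, IsGMax f Γ u → IsGMin f Γ u' → u < u' →
        (∀ w, u < w → w < u' → ¬ (IsGMax f Γ w ∨ IsGMin f Γ w)) →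
        ∀ r s : ℝ, u ≤ r → r ≤ s → s ≤ u' → f s - f r ≤ Γ)
    -- no drop larger than Γ between a Γ-minimum and the next Γ-maximum
    ∧ (∀ u u' : ℝ, IsGMin f Γ u → IsGMax f Γ u' → u < u' →
        (∀ w, u < w → w < u' → ¬ (IsGMax f Γ w ∨ IsGMin f Γ w)) →
        ∀ r s : ℝ, u ≤ r → r ≤ s → s ≤ u' → f r - f s ≤ Γ) := by
  have hdmin' : ∀ u v : ℝ, IsLocMaxPt (fun t => -f t) u → IsLocMaxPt (fun t => -f t) v →
      u ≠ v → -f u ≠ -f v := by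
    intro u v hu hv huv h
    exact hdistinct_min u v hu hv huv (by linarith)
  have hdmm : ∀ u v : ℝ, IsLocMaxPt (fun t => -(-f t)) u → IsLocMaxPt (fun t => -(-f t)) v →
      u ≠ v → -(-f u) ≠ -(-f v) := by
    intro u v hu hv huv h
    exact hdistinct_max u v (isLocMaxPt_negneg.mp hu) (isLocMaxPt_negneg.mp hv) huv (by linarith)
  refine ⟨?_, ?_, ?_, ?_, ?_, ?_, ?_, ?_, ?_⟩
  · -- disjointness
    rintro u ⟨⟨a, b, hau, hub, hmax, -, -⟩, ⟨c, d, hcu, hud, hmin, -, -⟩⟩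
    have hmin' : ∀ t ∈ Set.Icc c d, f u ≤ f t := by
      intro t ht; have := hmin t ht; simpa using this
    set p := max a c with hp
    set q := min b d with hq
    have hpu : p < u := max_lt hau hcu
    have huq : u < q := lt_min hub hud
    have hequ : ∀ t ∈ Set.Icc p q, f t = f u := by
      rintro t ⟨ht1, ht2⟩
      have h₁ : f t ≤ f u := hmax t ⟨le_trans (le_max_left a c) ht1,
        le_trans ht2 (min_le_left b d)⟩
      have h₂ : f u ≤ f t := hmin' t ⟨le_trans (le_max_right a c) ht1,
        le_trans ht2 (min_le_right b d)⟩
      linarith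
    refine flat_false hdistinct_max (lt_trans hpu huq) ?_
    intro t ht
    rw [hequ t ht, hequ p ⟨le_refl p, le_of_lt (lt_trans hpu huq)⟩]
  · -- local finiteness
    intro c d
    rcases le_or_gt c d with hcd | hcd
    swap
    · rw [Set.Icc_eq_empty (not_le.mpr hcd)]
      simp
    obtain ⟨δ, hδ, hδ'⟩ := Metric.uniformContinuousOn_iff.mp
      ((isCompact_Icc (a := c) (b := d)).uniformContinuousOn_of_continuous
        hf.continuousOn) Γ hΓ
    have sepmax : ∀ (h : ℝ → ℝ), (∀ u v : ℝ, IsLocMaxPt h u → IsLocMaxPt h v → u ≠ v →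
        h u ≠ h v) → (∀ x ∈ Set.Icc c d, ∀ y ∈ Set.Icc c d, dist x y < δ →
          |h x - h y| < Γ) →
        ({u | IsGMax h Γ u} ∩ Set.Icc c d).Finite := by
      intro h hd hcont
      refine finite_of_separated hδ (Set.inter_subset_right) ?_
      rintro x ⟨hx, hxI⟩ y ⟨hy, hyI⟩ hxy
      by_contra hlt
      push_neg at hlt
      have key : ∀ p q : ℝ, IsGMax h Γ p → IsGMax h Γ q → p ∈ Set.Icc c d →
          q ∈ Set.Icc c d → p < q → |p - q| < δ → False := by
        intro p q hp hq hpI hqI hpq habs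
        obtain ⟨w, hw1, hw2, hw3⟩ := gap hΓ hd hp hq hpq
        have hwI : w ∈ Set.Icc c d := ⟨le_trans hpI.1 (le_of_lt hw1),
          le_trans (le_of_lt hw2) hqI.2⟩
        have hdist : dist p w < δ := by
          rw [Real.dist_eq]
          rw [abs_of_nonpos (by linarith)] at habs
          rw [abs_of_nonpos (by linarith)]
          linarith
        have := hcont p hpI w hwI hdist
        have hm := min_le_left (h p) (h q)
        have := le_abs_self (h p - h w)
        linarith
      rcases lt_or_gt_of_ne hxy with hlt' | hlt'
      · exact key x y hx hy hxI hyI hlt' hlt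
      · exact key y x hy hx hyI hxI hlt' (by rw [abs_sub_comm] at hlt; exact hlt)
    have finmax := sepmax f hdistinct_max (fun x hx y hy hxy => by
      have := hδ' x hx y hy hxy; rwa [Real.dist_eq] at this)
    have finmin := sepmax (fun t => -f t) hdmin' (fun x hx y hy hxy => by
      have := hδ' x hx y hy hxy; rw [Real.dist_eq] at this
      rw [show -f x - -f y = -(f x - f y) by ring, abs_neg]
      exact this)
    refine Set.Finite.subset (finmax.union finmin) ?_
    rintro z ⟨hz | hz, hzI⟩
    · exact Or.inl ⟨hz, hzI⟩
    · exact Or.inr ⟨hz, hzI⟩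
  · -- unboundedness
    intro T
    have htopn : ∀ M T : ℝ, ∃ t, T ≤ t ∧ M ≤ -f t := by
      intro M T; obtain ⟨t, h1, h2⟩ := hliminf_top (-M) T; exact ⟨t, h1, by linarith⟩
    have hbotn : ∀ M T : ℝ, ∃ t, T ≤ t ∧ -f t ≤ M := by
      intro M T; obtain ⟨t, h1, h2⟩ := hlimsup_top (-M) T; exact ⟨t, h1, by linarith⟩
    have htopn' : ∀ M T : ℝ, ∃ t, t ≤ T ∧ M ≤ -f t := by
      intro M T; obtain ⟨t, h1, h2⟩ := hliminf_bot (-M) T; exact ⟨t, h1, by linarith⟩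
    have hbotn' : ∀ M T : ℝ, ∃ t, t ≤ T ∧ -f t ≤ M := by
      intro M T; obtain ⟨t, h1, h2⟩ := hlimsup_bot (-M) T; exact ⟨t, h1, by linarith⟩
    exact ⟨exists_gmax_right hf hΓ hlimsup_top hliminf_top T,
      exists_gmax_left hf hΓ hlimsup_bot hliminf_bot T,
      exists_gmax_right hf.neg hΓ htopn hbotn T,
      exists_gmax_left hf.neg hΓ htopn' hbotn' T⟩
  · -- exactly one Γ-min between consecutive Γ-maxima
    intro u₁ u₂ h1 h2 h12 hno
    obtain ⟨v, hv1, hv2, hv3, -, -, -, huniq⟩ :=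
      between hf hΓ hdistinct_max hdmin' h1 h2 h12 hno
    exact ⟨v, ⟨hv3, hv1, hv2⟩, fun y ⟨ha, hb, hc⟩ => huniq y ha hb hc⟩
  · -- exactly one Γ-max between consecutive Γ-minima
    intro u₁ u₂ h1 h2 h12 hno
    obtain ⟨v, hv1, hv2, hv3, -, -, -, huniq⟩ :=
      between hf.neg hΓ hdmin' hdmm h1 h2 h12 hno
    exact ⟨v, ⟨isGMin_neg.mp hv3, hv1, hv2⟩,
      fun y ⟨ha, hb, hc⟩ => huniq y (isGMin_neg.mpr ha) hb hc⟩
  · -- adjacent Γ-maxima testify the Γ-minimum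
    intro u u₁ u₂ hu h1 h2 h1u hu2 hno
    obtain ⟨v, hv1, hv2, hv3, hv4, hv5, hv6, huniq⟩ :=
      between hf hΓ hdistinct_max hdmin' h1 h2 (lt_trans h1u hu2) hno
    have huv : u = v := huniq u hu h1u hu2
    subst huv
    refine ⟨h1u, hu2, fun t ht => ?_, ?_, ?_⟩
    · have := hv4 t ht; simp only [neg_le_neg_iff]; exact this
    · show -f u₁ < -f u - Γ; linarith
    · show -f u₂ < -f u - Γ; linarith
  · -- adjacent Γ-minima testify the Γ-maximum
    intro u u₁ u₂ hu h1 h2 h1u hu2 hno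
    obtain ⟨v, hv1, hv2, hv3, hv4, hv5, hv6, huniq⟩ :=
      between hf.neg hΓ hdmin' hdmm h1 h2 (lt_trans h1u hu2) hno
    have huv : u = v := huniq u (isGMin_neg.mpr hu) h1u hu2
    subst huv
    have hv5' : -f u < -f u₁ - Γ := hv5
    have hv6' : -f u < -f u₂ - Γ := hv6
    refine ⟨h1u, hu2, fun t ht => ?_, by linarith, by linarith⟩
    have h4 : -f u ≤ -f t := hv4 t ht
    linarith
  · -- no rise bigger than Γ
    intro u u' hu hu' huu hno
    exact no_rise hf hΓ hu hu' huu hno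
  · -- no drop bigger than Γ
    intro u u' hu hu' huu hno r s h1 h2 h3
    have hno' : ∀ w, u < w → w < u' →
        ¬ (IsGMax (fun t => -f t) Γ w ∨ IsGMin (fun t => -f t) Γ w) := by
      intro w hw1 hw2 hor
      exact hno w hw1 hw2 (hor.elim (fun h => Or.inr h) (fun h => Or.inl (isGMin_neg.mp h)))
    have := no_rise hf.neg hΓ hu (isGMin_neg.mpr hu') huu hno' r s h1 h2 h3
    have h' : -f s - -f r ≤ Γ := this
    linarith
end

section
/- Explicit value of the two-sided Skorokhod reflection at the endpoint: let Γ > 0, a ≤ 0, and let b : [a, 0] → ℝ be continuous. Assume there exist s, v with a ≤ s ≤ v ≤ 0 such that (i) b(v) = max_{t ∈ [s, 0]} b(t), (ii) b(v) − b(s) = Γ, and (iii) b(v) − b(t) < Γ for every t ∈ [v, 0]. Let (x, L⁻, L⁺) be any solution on [a, 0] of the two-sided Skorokhod problem in [−Γ, Γ] driven by 2b. Then x_t = Γ + 2(b(t) − b(v)) for every t ∈ [v, 0]; in particular x_0 = Γ − 2(b(v) − b(0)), independently of a and of the initial value x_a. -/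
/-!
Since `x − 2b` equals `L⁻ − L⁺` up to a constant, the key fact is a crossing principle: if `L⁺`
only charges the times where `L⁻ − L⁺ < c`, then `L⁻ − L⁺` cannot go from `≥ c` to `< c`, because
after the last time it is `≥ c` only the nondecreasing `L⁻` moves. As `L⁺` only charges `{x = Γ}`
and `x_s ≥ −Γ`, the rise `b v − b s = Γ` then forces `x_v = Γ`. On `[v, 0]` the candidate
`Γ + 2 (b − b v)` stays in `(−Γ, Γ]`, so the crossing principle, applied to `L⁻ − L⁺` from below
and from above, shows that neither `L⁺` nor `L⁻` increases after `v`.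
-/

open MeasureTheory Set

namespace StieltjesFunction

lemma eq_of_measure_Ioc_eq_zero (L : StieltjesFunction ℝ) {u t : ℝ} (hut : u ≤ t)
    (h : L.measure (Ioc u t) = 0) : L t = L u := by
  rw [L.measure_Ioc, ENNReal.ofReal_eq_zero] at h
  linarith [L.mono hut]

lemma le_sub_of_measure_eq_zero (M P : StieltjesFunction ℝ) {p q c : ℝ} {S : Set ℝ}
    (hpq : p ≤ q) (hcont : ContinuousOn (fun r => M r - P r) (Icc p q)) (hp : c ≤ M p - P p)
    (hP : P.measure S = 0) (hS : ∀ r ∈ Icc p q, M r - P r < c → r ∈ S) :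
    c ≤ M q - P q := by
  set F := {r ∈ Icc p q | c ≤ M r - P r}
  have hF_closed : IsClosed F := hcont.preimage_isClosed_of_isClosed isClosed_Icc isClosed_Ici
  have hF_bdd : BddAbove F := ⟨q, fun r hr => hr.1.2⟩
  obtain ⟨⟨hpw, hwq⟩, hw⟩ : sSup F ∈ F :=
    hF_closed.csSup_mem ⟨p, ⟨le_rfl, hpq⟩, hp⟩ hF_bdd
  have h_below : Ioc (sSup F) q ⊆ S := by
    intro r ⟨hwr, hrq⟩
    have hr : r ∈ Icc p q := ⟨hpw.trans hwr.le, hrq⟩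
    exact hS r hr <| lt_of_not_ge fun hc => (le_csSup hF_bdd ⟨hr, hc⟩).not_gt hwr
  have hP_flat : P q = P (sSup F) := P.eq_of_measure_Ioc_eq_zero hwq (measure_mono_null h_below hP)
  linarith [M.mono hwq]

end StieltjesFunction

theorem skorokhod_endpoint_value_general
    (Γ a : ℝ)
    (b : ℝ → ℝ)
    (s v : ℝ) (has : a ≤ s) (hsv : s ≤ v) (hv0 : v ≤ 0)
    (hmax : ∀ t ∈ Set.Icc s (0:ℝ), b t ≤ b v)
    (hrise : b v - b s = Γ)
    (hnodrop : ∀ t ∈ Set.Icc v (0:ℝ), b v - b t < Γ)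
    (x : ℝ → ℝ) (Lm Lp : StieltjesFunction ℝ)
    (hLm : ContinuousOn (fun t => Lm t) (Set.Icc a 0))
    (hLp : ContinuousOn (fun t => Lp t) (Set.Icc a 0))
    (hxrange : ∀ t ∈ Set.Icc a (0:ℝ), x t ∈ Set.Icc (-Γ) Γ)
    (heq : ∀ t ∈ Set.Icc a (0:ℝ), x t = x a + Lm t - Lp t + 2 * (b t - b a))
    (hLmflat : Lm.measure {t | t ∈ Set.Icc a (0:ℝ) ∧ -Γ < x t} = 0)
    (hLpflat : Lp.measure {t | t ∈ Set.Icc a (0:ℝ) ∧ x t < Γ} = 0) :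
    (∀ t ∈ Set.Icc v (0:ℝ), x t = Γ + 2 * (b t - b v)) ∧
    x 0 = Γ - 2 * (b v - b 0) := by
  have hsub : ∀ {p q}, a ≤ p → q ≤ 0 → Icc p q ⊆ Icc a 0 :=
    fun hap hq0 _ hr => ⟨hap.trans hr.1, hr.2.trans hq0⟩
  have hva : a ≤ v := has.trans hsv
  have hv : v ∈ Icc a 0 := ⟨hva, hv0⟩
  have hxv : x v = Γ := by
    have hs : s ∈ Icc a 0 := ⟨has, hsv.trans hv0⟩
    have := Lm.le_sub_of_measure_eq_zero Lp hsv ((hLm.sub hLp).mono (hsub has hv0))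
      (c := Γ - x a + 2 * b a - 2 * b v) (by linarith [heq s hs, (hxrange s hs).1]) hLpflat
      fun r hr hlt => ⟨hsub has hv0 hr,
        by linarith [heq r (hsub has hv0 hr), hmax r ⟨hr.1, hr.2.trans hv0⟩]⟩
    linarith [heq v hv, (hxrange v hv).2]
  have hprofile : ∀ t ∈ Icc v (0:ℝ), x t = Γ + 2 * (b t - b v) := by
    intro t ⟨hvt, ht0⟩
    have hfrom_v : ∀ r ∈ Icc v t,
        x r - x v = (Lm r - Lp r) - (Lm v - Lp v) + 2 * (b r - b v) :=
      fun r hr => by linarith [heq r (hsub hva ht0 hr), heq v hv]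
    have hlower := Lm.le_sub_of_measure_eq_zero Lp hvt ((hLm.sub hLp).mono (hsub hva ht0))
      le_rfl hLpflat fun r hr hlt => ⟨hsub hva ht0 hr,
        by linarith [hfrom_v r hr, hmax r ⟨hsv.trans hr.1, hr.2.trans ht0⟩]⟩
    have hupper := Lp.le_sub_of_measure_eq_zero Lm hvt ((hLp.sub hLm).mono (hsub hva ht0))
      le_rfl hLmflat fun r hr hlt => ⟨hsub hva ht0 hr,
        by linarith [hfrom_v r hr, hnodrop r ⟨hr.1, hr.2.trans ht0⟩]⟩
    linarith [hfrom_v t ⟨hvt, le_rfl⟩]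
  exact ⟨hprofile, by linarith [hprofile 0 ⟨hv0, le_rfl⟩]⟩

/-- Explicit value of the two-sided Skorokhod reflection at the endpoint: let `Γ > 0`,
`a ≤ 0`, `b` continuous on `[a, 0]`, and suppose there are `a ≤ s ≤ v ≤ 0` with
`b v = max_{[s,0]} b`, `b v − b s = Γ` and `b v − b t < Γ` for `t ∈ [v, 0]`.
If `(x, L⁻, L⁺)` solves the two-sided Skorokhod problem in `[−Γ, Γ]` driven by `2b`
(with `L⁻, L⁺` nondecreasing — here Stieltjes functions — continuous on `[a, 0]`,
vanishing at `a`, whose Stieltjes measures put no mass on `{x > −Γ}` and `{x < Γ}`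
respectively), then `x t = Γ + 2 (b t − b v)` on `[v, 0]`; in particular
`x 0 = Γ − 2 (b v − b 0)`. -/
theorem skorokhod_endpoint_value
    (Γ a : ℝ) (hΓ : 0 < Γ) (ha : a ≤ 0)
    (b : ℝ → ℝ) (hb : ContinuousOn b (Set.Icc a 0))
    (s v : ℝ) (has : a ≤ s) (hsv : s ≤ v) (hv0 : v ≤ 0)
    (hmax : ∀ t ∈ Set.Icc s (0:ℝ), b t ≤ b v)
    (hrise : b v - b s = Γ)
    (hnodrop : ∀ t ∈ Set.Icc v (0:ℝ), b v - b t < Γ)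
    (x : ℝ → ℝ) (Lm Lp : StieltjesFunction ℝ)
    (hx : ContinuousOn x (Set.Icc a 0))
    (hLm : ContinuousOn (fun t => Lm t) (Set.Icc a 0))
    (hLp : ContinuousOn (fun t => Lp t) (Set.Icc a 0))
    (hxrange : ∀ t ∈ Set.Icc a (0:ℝ), x t ∈ Set.Icc (-Γ) Γ)
    (hLma : Lm a = 0) (hLpa : Lp a = 0)
    (heq : ∀ t ∈ Set.Icc a (0:ℝ), x t = x a + Lm t - Lp t + 2 * (b t - b a))
    (hLmflat : Lm.measure {t | t ∈ Set.Icc a (0:ℝ) ∧ -Γ < x t} = 0)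
    (hLpflat : Lp.measure {t | t ∈ Set.Icc a (0:ℝ) ∧ x t < Γ} = 0) :
    (∀ t ∈ Set.Icc v (0:ℝ), x t = Γ + 2 * (b t - b v)) ∧
    x 0 = Γ - 2 * (b v - b 0) :=
  skorokhod_endpoint_value_general Γ a b s v has hsv hv0 hmax hrise hnodrop x Lm Lp hLm hLp hxrange
    heq hLmflat hLpflat
end

section
/- Convolution identity for the invariant density: for every ε > 0 and every x ∈ ℝ, ∫_ℝ exp(−(ε/2)(e^y + e^{−y} + e^{x−y} + e^{y−x})) dy = 2 K₀(2ε cosh(x/2)). Consequently, the convolution of the density p_Γ with itself satisfies (p_Γ * p_Γ)(x) = K₀(2 e^{−Γ} cosh(x/2)) / (2 K₀(e^{−Γ})²) for every Γ > 0 and x ∈ ℝ. -/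
open MeasureTheory

/-- The modified Bessel function of the second kind of order 0:
`K₀ x = (1/2) ∫₀^∞ y⁻¹ exp(−(x/2)(y + 1/y)) dy`. -/
noncomputable def K0 (x : ℝ) : ℝ :=
  (1 / 2) * ∫ y in Set.Ioi (0 : ℝ), y⁻¹ * Real.exp (-(x / 2) * (y + 1 / y))

/-- The invariant density `p_Γ(x) = exp(−(ε/2)(eˣ + e⁻ˣ)) / (2 K₀(ε))` with `ε = e^{−Γ}`. -/
noncomputable def pGamma (Γ x : ℝ) : ℝ :=
  Real.exp (-(Real.exp (-Γ) / 2) * (Real.exp x + Real.exp (-x))) / (2 * K0 (Real.exp (-Γ)))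

/-- `K₀` as an integral over the whole real line, via the substitution `y = e^u`. -/
lemma K0_eq_integral_real (a : ℝ) :
    K0 a = (1 / 2) * ∫ u : ℝ, Real.exp (-(a / 2) * (Real.exp u + Real.exp (-u))) := by
  have himg : Set.Ioi (0 : ℝ) = Real.exp '' Set.univ := by
    ext y
    constructor
    · intro hy; exact ⟨Real.log y, trivial, Real.exp_log hy⟩
    · rintro ⟨u, -, rfl⟩; exact Real.exp_pos u
  have h := integral_image_eq_integral_abs_deriv_smul (s := Set.univ) (f := Real.exp)
    (f' := Real.exp) MeasurableSet.univ
    (fun x _ => (Real.hasDerivAt_exp x).hasDerivWithinAt)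
    (Real.exp_injective.injOn)
    (fun y => y⁻¹ * Real.exp (-(a / 2) * (y + 1 / y)))
  rw [K0, himg, h, MeasureTheory.setIntegral_univ]
  congr 1
  refine integral_congr_ae (Filter.Eventually.of_forall fun u => ?_)
  have hpos := Real.exp_pos u
  simp only [abs_of_pos hpos, smul_eq_mul, Real.exp_neg, one_div]
  field_simp

/-- First half: the convolution integral. -/
lemma conv_integral (ε : ℝ) (x : ℝ) :
    (∫ y : ℝ, Real.exp (-(ε / 2) *
        (Real.exp y + Real.exp (-y) + Real.exp (x - y) + Real.exp (y - x))))
      = 2 * K0 (2 * ε * Real.cosh (x / 2)) := by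
  set a : ℝ := 2 * ε * Real.cosh (x / 2) with ha
  have hpt : ∀ y : ℝ,
      Real.exp (-(ε / 2) * (Real.exp y + Real.exp (-y) + Real.exp (x - y) + Real.exp (y - x)))
        = Real.exp (-(a / 2) * (Real.exp (y - x / 2) + Real.exp (-(y - x / 2)))) := by
    intro y
    congr 1
    set E : ℝ := Real.exp (x / 2) with hE
    set U : ℝ := Real.exp (y - x / 2) with hU
    have h1 : Real.exp y = U * E := by
      rw [hU, hE, ← Real.exp_add]; congr 1; ring
    have h2 : Real.exp (-y) = U⁻¹ * E⁻¹ := by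
      rw [hU, hE, ← Real.exp_neg, ← Real.exp_neg, ← Real.exp_add]; congr 1; ring
    have h3 : Real.exp (x - y) = E * U⁻¹ := by
      rw [hU, hE, ← Real.exp_neg, ← Real.exp_add]; congr 1; ring
    have h4 : Real.exp (y - x) = U * E⁻¹ := by
      rw [hU, hE, ← Real.exp_neg, ← Real.exp_add]; congr 1; ring
    have h5 : Real.exp (-(y - x / 2)) = U⁻¹ := by rw [hU, Real.exp_neg]
    have h6 : Real.exp (-(x / 2)) = E⁻¹ := by rw [hE, Real.exp_neg]
    have hEne : E ≠ 0 := (Real.exp_pos _).ne'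
    have hUne : U ≠ 0 := (Real.exp_pos _).ne'
    rw [ha, Real.cosh_eq, h1, h2, h3, h4, h5, h6]
    field_simp
    ring
  calc (∫ y : ℝ, Real.exp (-(ε / 2) *
          (Real.exp y + Real.exp (-y) + Real.exp (x - y) + Real.exp (y - x))))
      = ∫ y : ℝ, Real.exp (-(a / 2) * (Real.exp (y - x / 2) + Real.exp (-(y - x / 2)))) := by
        exact integral_congr_ae (Filter.Eventually.of_forall hpt)
    _ = ∫ u : ℝ, Real.exp (-(a / 2) * (Real.exp u + Real.exp (-u))) :=
        integral_sub_right_eq_self (fun u => Real.exp (-(a / 2) * (Real.exp u + Real.exp (-u))))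
          (x / 2)
    _ = 2 * K0 a := by rw [K0_eq_integral_real a]; ring

/-- Convolution identity for the invariant density: for every `ε > 0` and `x ∈ ℝ`,
`∫_ℝ exp(−(ε/2)(e^y + e^{−y} + e^{x−y} + e^{y−x})) dy = 2 K₀(2ε cosh(x/2))`;
consequently `(p_Γ * p_Γ)(x) = K₀(2 e^{−Γ} cosh(x/2)) / (2 K₀(e^{−Γ})²)` for every
`Γ > 0` and `x ∈ ℝ`. -/
theorem convolution_identity :
    (∀ ε : ℝ, 0 < ε → ∀ x : ℝ,
      (∫ y : ℝ, Real.exp (-(ε / 2) *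
          (Real.exp y + Real.exp (-y) + Real.exp (x - y) + Real.exp (y - x))))
        = 2 * K0 (2 * ε * Real.cosh (x / 2)))
    ∧ (∀ Γ : ℝ, 0 < Γ → ∀ x : ℝ,
      (∫ y : ℝ, pGamma Γ y * pGamma Γ (x - y))
        = K0 (2 * Real.exp (-Γ) * Real.cosh (x / 2)) / (2 * (K0 (Real.exp (-Γ))) ^ 2)) := by
  constructor
  · intro ε _ x
    exact conv_integral ε x
  · intro Γ _ x
    set ε : ℝ := Real.exp (-Γ) with hε
    by_cases hK : K0 ε = 0
    · simp [pGamma, ← hε, hK]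
    · have hpt : ∀ y : ℝ, pGamma Γ y * pGamma Γ (x - y)
          = Real.exp (-(ε / 2) *
              (Real.exp y + Real.exp (-y) + Real.exp (x - y) + Real.exp (y - x)))
            / (2 * K0 ε)^2 := by
        intro y
        simp only [pGamma, ← hε, div_mul_div_comm, ← Real.exp_add, sq,
          show -(x - y) = y - x from by ring]
        congr 2
        ring
      calc (∫ y : ℝ, pGamma Γ y * pGamma Γ (x - y))
          = ∫ y : ℝ, Real.exp (-(ε / 2) *
              (Real.exp y + Real.exp (-y) + Real.exp (x - y) + Real.exp (y - x)))
              / (2 * K0 ε)^2 := integral_congr_ae (Filter.Eventually.of_forall hpt)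
        _ = (∫ y : ℝ, Real.exp (-(ε / 2) *
              (Real.exp y + Real.exp (-y) + Real.exp (x - y) + Real.exp (y - x))))
              / (2 * K0 ε)^2 := integral_div _ _
        _ = (2 * K0 (2 * ε * Real.cosh (x / 2))) / (2 * K0 ε)^2 := by
              rw [conv_integral ε x]
        _ = K0 (2 * ε * Real.cosh (x / 2)) / (2 * (K0 ε) ^ 2) := by
              field_simp
end
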